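/- arXiv:2402.03258 — 4 statements merged into one kernel-verified Lean document; each statement's English description precedes it below -/
import Mathlib

section
/- For every finite sequence of points contained in the closed unit ball of (ℝ², ℓ2) (the Euclidean unit disk), there exists a wake-up tree rooted at the origin spanning these points whose makespan is at most 5√2. Equivalently, γ(ℓ2) ≤ 5√2 ≈ 7.07. -/
/-- Binary trees with labeled nodes. A wake-up tree with source `s` is modeled by the
subtree hanging at the unique child of the root (the root itself is labeled `s`). -/
inductive BTree (α : Type) where
  | nil : BTree α
  | node : α → BTree α → BTree α → BTree α

namespace BTree
/-- The multiset of labels of a binary tree. -/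
def labels {α : Type} : BTree α → Multiset α
  | .nil => 0
  | .node p l r => p ::ₘ (labels l + labels r)
end BTree

/-- `η` is a norm on `ℝ²`. -/
def IsNorm (η : ℝ × ℝ → ℝ) : Prop :=
  (∀ x, η x = 0 ↔ x = 0) ∧
  (∀ (a : ℝ) (x : ℝ × ℝ), η (a • x) = |a| * η x) ∧
  (∀ x y : ℝ × ℝ, η (x + y) ≤ η x + η y)

/-- The makespan of a wake-up tree: maximum total η-edge-length of a root-to-leaf path,
where the previous (parent) position is `s`. -/
noncomputable def makespan (η : ℝ × ℝ → ℝ) : ℝ × ℝ → BTree (ℝ × ℝ) → ℝ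
  | _, .nil => 0
  | s, .node p l r => η (p - s) + max (makespan η p l) (makespan η p r)

/-- `γₙ(η)`: sup over sequences of `n` points in the closed unit η-ball of the minimum
makespan of a wake-up tree rooted at the origin spanning them. -/
noncomputable def gammaN (η : ℝ × ℝ → ℝ) (n : ℕ) : ℝ :=
  sSup { m : ℝ | ∃ ps : List (ℝ × ℝ), ps.length = n ∧ (∀ p ∈ ps, η p ≤ 1) ∧
    m = sInf { t : ℝ | ∃ T : BTree (ℝ × ℝ), T.labels = ↑ps ∧ makespan η 0 T = t } }

/-- The wake-up ratio `γ(η) = sup_n γₙ(η)`. -/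
noncomputable def gamma (η : ℝ × ℝ → ℝ) : ℝ := sSup (Set.range (gammaN η))

/-- The ℓ1-norm on ℝ². -/
noncomputable def l1 (p : ℝ × ℝ) : ℝ := |p.1| + |p.2|

/-- The Euclidean (ℓ2) norm on ℝ². -/
noncomputable def l2 (p : ℝ × ℝ) : ℝ := Real.sqrt (p.1 ^ 2 + p.2 ^ 2)

/-! Charge every edge its ℓ1 length, which dominates its ℓ2 length. Wake the topmost point
first, then split the remaining points by a vertical line into two strips of width 1; inside a
strip of width `w`, wake its topmost point and recurse on the two halves of width `w / 2`.
Every root-to-leaf path then descends, so after the first edge (of length at most 1) its vertical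
moves add up to at most 2 and its horizontal moves to at most `2 + 1 + 1/2 + ⋯ = 4`.
The makespan is therefore at most `7 < 5√2`. -/

open Set

lemma l2_le_l1 (x : ℝ × ℝ) : l2 x ≤ l1 x := by
  rw [l2, l1, Real.sqrt_le_left (by positivity)]
  nlinarith [sq_abs x.1, sq_abs x.2, abs_nonneg x.1, abs_nonneg x.2]

lemma l2_nonneg (x : ℝ × ℝ) : 0 ≤ l2 x := Real.sqrt_nonneg _

lemma abs_fst_le_l2 (x : ℝ × ℝ) : |x.1| ≤ l2 x :=
  Real.abs_le_sqrt (le_add_of_nonneg_right (sq_nonneg x.2))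

lemma abs_snd_le_l2 (x : ℝ × ℝ) : |x.2| ≤ l2 x :=
  Real.abs_le_sqrt (le_add_of_nonneg_left (sq_nonneg x.1))

lemma seven_le_five_mul_sqrt_two : (7 : ℝ) ≤ 5 * Real.sqrt 2 := by
  nlinarith [Real.sq_sqrt (zero_le_two : (0 : ℝ) ≤ 2), Real.sqrt_nonneg 2]

lemma makespan_nonneg {η : ℝ × ℝ → ℝ} (hη : ∀ x, 0 ≤ η x) :
    ∀ (s : ℝ × ℝ) (T : BTree (ℝ × ℝ)), 0 ≤ makespan η s T
  | _, .nil => le_rfl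
  | s, .node p l _ =>
    add_nonneg (hη (p - s)) ((makespan_nonneg hη p l).trans (le_max_left _ _))

lemma exists_makespan_node_le {η : ℝ × ℝ → ℝ} {S : Multiset (ℝ × ℝ)} {p s : ℝ × ℝ}
    (hp : p ∈ S) (f : ℝ × ℝ → Prop) [DecidablePred f] {a b : ℝ} (hedge : η (p - s) ≤ a)
    (hleft : ∃ T, T.labels = (S.erase p).filter f ∧ makespan η p T ≤ b)
    (hright : ∃ T, T.labels = (S.erase p).filter (¬ f ·) ∧ makespan η p T ≤ b) :
    ∃ T : BTree (ℝ × ℝ), T.labels = S ∧ makespan η s T ≤ a + b := by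
  obtain ⟨TL, hTL, hL⟩ := hleft
  obtain ⟨TR, hTR, hR⟩ := hright
  refine ⟨.node p TL TR, ?_, add_le_add hedge (max_le hL hR)⟩
  rw [BTree.labels, hTL, hTR, Multiset.filter_add_not, Multiset.cons_erase hp]

theorem exists_makespan_le_of_strip {η : ℝ × ℝ → ℝ} (hη : ∀ x, η x ≤ l1 x)
    (S : Multiset (ℝ × ℝ)) {q : ℝ × ℝ} {u w b D : ℝ} (hw : 0 ≤ w) (hD : 0 ≤ D) (hb : b ≤ q.2)
    (hS : ∀ x ∈ S, x.1 ∈ Icc u (u + w) ∧ x.2 ∈ Icc b q.2 ∧ |x.1 - q.1| ≤ D) :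
    ∃ T : BTree (ℝ × ℝ), T.labels = S ∧ makespan η q T ≤ D + 2 * w + (q.2 - b) := by
  induction S using Multiset.strongInductionOn generalizing q u w D with
  | ih S ih =>
  rcases eq_or_ne S 0 with rfl | hne
  · exact ⟨.nil, rfl, by simp only [makespan]; linarith⟩
  obtain ⟨p, hp, htop⟩ := Multiset.exists_max_image (·.2) hne
  obtain ⟨⟨hpu, hpw⟩, ⟨hpb, hpq⟩, hpD⟩ := hS p hp
  have hedge : η (p - q) ≤ D + (q.2 - p.2) := by
    refine (hη _).trans ?_
    rw [l1, Prod.fst_sub, Prod.snd_sub, abs_of_nonpos (sub_nonpos.mpr hpq)]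
    linarith
  have child : ∀ t ≤ S.erase p, ∀ v, (∀ x ∈ t, x.1 ∈ Icc v (v + w / 2)) →
      ∃ T : BTree (ℝ × ℝ), T.labels = t ∧ makespan η p T ≤ w + 2 * (w / 2) + (p.2 - b) := by
    intro t ht v hv
    have hmem : ∀ x ∈ t, x ∈ S := fun x hx =>
      Multiset.mem_of_mem_erase (Multiset.mem_of_le ht hx)
    refine ih t (ht.trans_lt (Multiset.erase_lt.mpr hp)) (u := v) (by linarith) hw hpb
      fun x hx => ?_
    obtain ⟨⟨hxu, hxw⟩, ⟨hxb, -⟩, -⟩ := hS x (hmem x hx)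
    refine ⟨hv x hx, ⟨hxb, htop x (hmem x hx)⟩, abs_sub_le_iff.mpr ⟨by linarith, by linarith⟩⟩
  obtain ⟨T, hT, hmake⟩ := exists_makespan_node_le hp (·.1 ≤ u + w / 2) hedge
    (child _ (Multiset.filter_le _ _) u fun x hx => by
      obtain ⟨hx, hxm⟩ := Multiset.mem_filter.mp hx
      exact ⟨(hS x (Multiset.mem_of_mem_erase hx)).1.1, hxm⟩)
    (child _ (Multiset.filter_le _ _) (u + w / 2) fun x hx => by
      obtain ⟨hx, hxm⟩ := Multiset.mem_filter.mp hx
      exact ⟨(not_le.mp hxm).le, by linarith [(hS x (Multiset.mem_of_mem_erase hx)).1.2]⟩)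
  exact ⟨T, hT, hmake.trans_eq (by ring)⟩

theorem exists_makespan_le_seven {η : ℝ × ℝ → ℝ} (hη : ∀ x, η x ≤ l1 x)
    (S : Multiset (ℝ × ℝ)) (hball : ∀ x ∈ S, η x ≤ 1)
    (hsquare : ∀ x ∈ S, |x.1| ≤ 1 ∧ |x.2| ≤ 1) :
    ∃ T : BTree (ℝ × ℝ), T.labels = S ∧ makespan η 0 T ≤ 7 := by
  rcases eq_or_ne S 0 with rfl | hne
  · exact ⟨.nil, rfl, by norm_num [makespan]⟩
  obtain ⟨p, hp, htop⟩ := Multiset.exists_max_image (·.2) hne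
  have hp2 := abs_le.mp (hsquare p hp).2
  have child : ∀ t ≤ S.erase p, ∀ u, (∀ x ∈ t, x.1 ∈ Icc u (u + 1)) →
      ∃ T : BTree (ℝ × ℝ), T.labels = t ∧ makespan η p T ≤ 6 := by
    intro t ht u hu
    have hmem : ∀ x ∈ t, x ∈ S := fun x hx =>
      Multiset.mem_of_mem_erase (Multiset.mem_of_le ht hx)
    obtain ⟨T, hT, hmake⟩ := exists_makespan_le_of_strip hη t (D := 2) zero_le_one zero_le_two
      hp2.1 fun x hx => by
        have hx1 := abs_le.mp (hsquare x (hmem x hx)).1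
        have hp1 := abs_le.mp (hsquare p hp).1
        refine ⟨hu x hx, ⟨(abs_le.mp (hsquare x (hmem x hx)).2).1, htop x (hmem x hx)⟩,
          abs_sub_le_iff.mpr ⟨by linarith, by linarith⟩⟩
    exact ⟨T, hT, by linarith⟩
  have hsquare_erase : ∀ x ∈ S.erase p, |x.1| ≤ 1 := fun x hx =>
    (hsquare x (Multiset.mem_of_mem_erase hx)).1
  obtain ⟨T, hT, hle⟩ := exists_makespan_node_le hp (·.1 ≤ 0) (s := 0) (a := 1)
    (by simpa using hball p hp)
    (child _ (Multiset.filter_le _ _) (-1) fun x hx => by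
      obtain ⟨hx, hxm⟩ := Multiset.mem_filter.mp hx
      exact ⟨(abs_le.mp (hsquare_erase x hx)).1, by linarith⟩)
    (child _ (Multiset.filter_le _ _) 0 fun x hx => by
      obtain ⟨hx, hxm⟩ := Multiset.mem_filter.mp hx
      exact ⟨(not_le.mp hxm).le, by linarith [(abs_le.mp (hsquare_erase x hx)).2]⟩)
  exact ⟨T, hT, by linarith⟩

theorem gamma_le_of_forall_exists_makespan_le {η : ℝ × ℝ → ℝ} (hη : ∀ x, 0 ≤ η x) {c : ℝ}
    (h : ∀ ps : List (ℝ × ℝ), (∀ p ∈ ps, η p ≤ 1) →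
      ∃ T : BTree (ℝ × ℝ), T.labels = ↑ps ∧ makespan η 0 T ≤ c) :
    gamma η ≤ c := by
  have hc : 0 ≤ c := by
    obtain ⟨T, -, hT⟩ := h [] (by simp)
    exact (makespan_nonneg hη 0 T).trans hT
  refine Real.sSup_le ?_ hc
  rintro _ ⟨n, rfl⟩
  refine Real.sSup_le ?_ hc
  rintro _ ⟨ps, -, hps, rfl⟩
  obtain ⟨T, hT, hle⟩ := h ps hps
  refine le_trans (csInf_le ⟨0, ?_⟩ ⟨T, hT, rfl⟩) hle
  rintro _ ⟨T', -, rfl⟩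
  exact makespan_nonneg hη 0 T'

/-- any finite sequence of points in the closed Euclidean unit disk admits a
wake-up tree rooted at the origin of makespan at most 5√2; equivalently, γ(ℓ2) ≤ 5√2. -/
theorem ftp_l2_makespan_le_five_sqrt_two :
    (∀ ps : List (ℝ × ℝ), (∀ p ∈ ps, l2 p ≤ 1) →
      ∃ T : BTree (ℝ × ℝ), T.labels = ↑ps ∧ makespan l2 0 T ≤ 5 * Real.sqrt 2) ∧
    gamma l2 ≤ 5 * Real.sqrt 2 := by
  have hwake : ∀ ps : List (ℝ × ℝ), (∀ p ∈ ps, l2 p ≤ 1) →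
      ∃ T : BTree (ℝ × ℝ), T.labels = ↑ps ∧ makespan l2 0 T ≤ 5 * Real.sqrt 2 := by
    intro ps hps
    have hball : ∀ x ∈ (ps : Multiset (ℝ × ℝ)), l2 x ≤ 1 := fun x hx =>
      hps x (Multiset.mem_coe.mp hx)
    obtain ⟨T, hT, hle⟩ := exists_makespan_le_seven l2_le_l1 _ hball fun x hx =>
      ⟨(abs_fst_le_l2 x).trans (hball x hx), (abs_snd_le_l2 x).trans (hball x hx)⟩
    exact ⟨T, hT, hle.trans seven_le_five_mul_sqrt_two⟩
  exact ⟨hwake, gamma_le_of_forall_exists_makespan_le l2_nonneg hwake⟩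
end

section
/- Let S be the square of diameter 1 in the ℓ1-plane given by S = {(x,y) ∈ ℝ² : |x − 1/2| + |y| ≤ 1/2}, which has the origin (0,0) as one of its corners. For every sequence of n ≤ 5 points in S, there exists a wake-up tree rooted at (0,0) spanning these points, with edge lengths measured in the ℓ1-norm, whose makespan is at most 2. -/
/-- The square of ℓ1-diameter 1 with corner at the origin (ℓ1-ball of radius 1/2
centered at (1/2, 0)). -/
def squareS : Set (ℝ × ℝ) := { p | |p.1 - 1/2| + |p.2| ≤ 1/2 }

/-! In the rotated coordinates `u = x - y`, `v = x + y` the square `squareS` is the unit square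
`[0, 1]²` and `l1` is the sup-distance, so all points lie within distance 1 of the origin and of
each other; in particular three points are woken by time 2 with a star.

For four or five points, if some pair `a, c` has `l1 a + l1 (c - a) ≤ 1`, the tree
`a → {b, c → {d, e}}` works. Otherwise all pairs are far apart, and two far points on the same
side of the x-axis, say where `u ≤ v`, are at distance `|Δu|`. Reflecting in the x-axis if
necessary, at least half of the points have `u ≤ v`; sorted by decreasing `u` they form a chain
along which distances telescope: `l1 a + l1 (c - a) + l1 (d - c) ≤ v a + u a - u d ≤ 2`. The at
most two points `m, n` below the axis, sorted by decreasing `v`, form such a chain too; the tree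
visits them after `a` if `v m ≤ u a`, and before `a` otherwise. -/

namespace BTree

variable {α β : Type}

def map (f : α → β) : BTree α → BTree β
  | nil => nil
  | node p l r => node (f p) (l.map f) (r.map f)

theorem labels_map (f : α → β) (T : BTree α) : (T.map f).labels = T.labels.map f := by
  induction T with
  | nil => rfl
  | node p l r ihl ihr => simp [map, labels, ihl, ihr]

def star (c : α) : List α → BTree α
  | [] => node c nil nil
  | [d] => node c (node d nil nil) nil
  | d :: e :: _ => node c (node d nil nil) (node e nil nil)

theorem labels_star (c : α) {ds : List α} (h : ds.length ≤ 2) :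
    (star c ds).labels = c ::ₘ ds := by
  match ds, h with
  | [], _ => rfl
  | [d], _ => rfl
  | [d, e], _ => simp [star, labels]; rfl

end BTree

theorem makespan_map {η : ℝ × ℝ → ℝ} {f : ℝ × ℝ → ℝ × ℝ}
    (hf : ∀ p q, η (f p - f q) = η (p - q)) (s : ℝ × ℝ) (T : BTree (ℝ × ℝ)) :
    makespan η (f s) (T.map f) = makespan η s T := by
  induction T generalizing s with
  | nil => rfl
  | node p l r ihl ihr => simp [BTree.map, makespan, hf, ihl, ihr]

theorem makespan_star_le {η : ℝ × ℝ → ℝ} {s c : ℝ × ℝ} {ds : List (ℝ × ℝ)} {δ : ℝ}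
    (hδ : 0 ≤ δ) (h : ∀ d ∈ ds, η (d - c) ≤ δ) :
    makespan η s (BTree.star c ds) ≤ η (c - s) + δ := by
  match ds with
  | [] => simp [BTree.star, makespan, hδ]
  | [d] => simpa [BTree.star, makespan, hδ] using h
  | d :: e :: _ =>
    simpa [BTree.star, makespan, hδ] using And.intro (h d (by simp)) (h e (by simp))

theorem List.exists_perm_pairwise_ge_comp {α β : Type*} [LinearOrder β] (f : α → β)
    (l : List α) : ∃ l' : List α, l'.Perm l ∧ l'.Pairwise fun a b => f b ≤ f a :=
  ⟨l.mergeSort fun a b => decide (f b ≤ f a), List.mergeSort_perm _ _, by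
    simpa using List.pairwise_mergeSort (le := fun a b => decide (f b ≤ f a))
      (fun _ _ _ h₁ h₂ => by simp only [decide_eq_true_eq] at *; exact h₂.trans h₁)
      (fun a b => by simpa using le_total (f b) (f a)) l⟩

theorem abs_add_abs_eq_max {α : Type*} [AddCommGroup α] [LinearOrder α] [IsOrderedAddMonoid α]
    (a b : α) : |a| + |b| = max |a - b| |a + b| := by
  grind

namespace SquareWakeUp

def u (p : ℝ × ℝ) : ℝ := p.1 - p.2

def v (p : ℝ × ℝ) : ℝ := p.1 + p.2

@[simp] theorem u_sub (p q : ℝ × ℝ) : u (p - q) = u p - u q := by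
  simp only [u, Prod.fst_sub, Prod.snd_sub]; ring

@[simp] theorem v_sub (p q : ℝ × ℝ) : v (p - q) = v p - v q := by
  simp only [v, Prod.fst_sub, Prod.snd_sub]; ring

theorem l1_eq_max_abs (p : ℝ × ℝ) : l1 p = max |u p| |v p| :=
  abs_add_abs_eq_max p.1 p.2

theorem mem_squareS_iff {p : ℝ × ℝ} : p ∈ squareS ↔ u p ∈ Set.Icc 0 1 ∧ v p ∈ Set.Icc 0 1 := by
  rw [squareS, Set.mem_ofPred_eq, abs_add_abs_eq_max, max_le_iff, abs_le, abs_le]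
  simp only [u, v, Set.mem_Icc]
  constructor <;> rintro ⟨⟨_, _⟩, _, _⟩ <;> refine ⟨⟨?_, ?_⟩, ?_, ?_⟩ <;> linarith

def reflect (p : ℝ × ℝ) : ℝ × ℝ := (p.1, -p.2)

@[simp] theorem u_reflect (p : ℝ × ℝ) : u (reflect p) = v p := by
  simp [u, v, reflect]

@[simp] theorem v_reflect (p : ℝ × ℝ) : v (reflect p) = u p := by
  simp [u, v, reflect]; ring

theorem reflect_involutive : Function.Involutive reflect := fun p => by simp [reflect]

theorem l1_reflect (p : ℝ × ℝ) : l1 (reflect p) = l1 p := by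
  rw [l1_eq_max_abs, l1_eq_max_abs, u_reflect, v_reflect, max_comm]

theorem l1_reflect_sub (p q : ℝ × ℝ) : l1 (reflect p - reflect q) = l1 (p - q) := by
  rw [l1_eq_max_abs, l1_eq_max_abs, u_sub, v_sub, u_sub, v_sub, u_reflect, v_reflect,
    u_reflect, v_reflect, max_comm]

theorem reflect_mem_squareS {p : ℝ × ℝ} : reflect p ∈ squareS ↔ p ∈ squareS := by
  rw [mem_squareS_iff, mem_squareS_iff, u_reflect, v_reflect, and_comm]

def WakesUpByTwo (P : Multiset (ℝ × ℝ)) : Prop :=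
  ∃ T : BTree (ℝ × ℝ), T.labels = P ∧ makespan l1 0 T ≤ 2

theorem WakesUpByTwo.of_map_reflect {P : Multiset (ℝ × ℝ)} (h : WakesUpByTwo (P.map reflect)) :
    WakesUpByTwo P := by
  obtain ⟨T, hT, hm⟩ := h
  refine ⟨T.map reflect, ?_, ?_⟩
  · rw [BTree.labels_map, hT, Multiset.map_map, reflect_involutive.comp_self, Multiset.map_id]
  · have h0 : reflect 0 = 0 := by simp [reflect]
    simpa [h0] using (makespan_map l1_reflect_sub 0 T).trans_le hm

def Far (p q : ℝ × ℝ) : Prop := 1 < l1 p + l1 (q - p) ∧ 1 < l1 q + l1 (p - q)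

theorem Far.symm {p q : ℝ × ℝ} (h : Far p q) : Far q p := And.symm h

theorem far_reflect_iff {p q : ℝ × ℝ} : Far (reflect p) (reflect q) ↔ Far p q := by
  simp only [Far, l1_reflect, l1_reflect_sub]

theorem l1_le_one {p : ℝ × ℝ} (hp : p ∈ squareS) : l1 p ≤ 1 := by
  rw [mem_squareS_iff, Set.mem_Icc, Set.mem_Icc] at hp
  rw [l1_eq_max_abs]
  grind

theorem l1_sub_le_one {p q : ℝ × ℝ} (hp : p ∈ squareS) (hq : q ∈ squareS) : l1 (p - q) ≤ 1 := by
  rw [mem_squareS_iff, Set.mem_Icc, Set.mem_Icc] at hp hq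
  rw [l1_eq_max_abs, u_sub, v_sub]
  grind

theorem l1_sub_comm (p q : ℝ × ℝ) : l1 (p - q) = l1 (q - p) := by
  rw [← neg_sub, l1, l1, Prod.fst_neg, Prod.snd_neg, abs_neg, abs_neg]

-- If `|v q - v p|` exceeded `|u q - u p|`, the one of `p, q` with the smaller `v` would reach
-- the other one at time `max (v p) (v q) ≤ 1`.
theorem l1_sub_le_of_far {p q : ℝ × ℝ} (hp : p ∈ squareS) (hq : q ∈ squareS)
    (hup : u p ≤ v p) (huq : u q ≤ v q) (hpq : Far p q) (h : u q ≤ u p) :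
    l1 (q - p) ≤ u p - u q := by
  rw [mem_squareS_iff, Set.mem_Icc, Set.mem_Icc] at hp hq
  obtain ⟨h₁, h₂⟩ := hpq
  simp only [l1_eq_max_abs, u_sub, v_sub] at h₁ h₂ ⊢
  grind

theorem l1_sub_le_of_far_of_lower {p q : ℝ × ℝ} (hp : p ∈ squareS) (hq : q ∈ squareS)
    (hvp : v p ≤ u p) (hvq : v q ≤ u q) (hpq : Far p q) (h : v q ≤ v p) :
    l1 (q - p) ≤ v p - v q := by
  simpa [l1_reflect_sub] using l1_sub_le_of_far (reflect_mem_squareS.2 hp)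
    (reflect_mem_squareS.2 hq) (by simpa using hvp) (by simpa using hvq)
    (far_reflect_iff.2 hpq) (by simpa using h)

theorem l1_sub_add_min_le_one {p q : ℝ × ℝ} (hp : p ∈ squareS) (hq : q ∈ squareS)
    (hup : u p ≤ v p) (hvq : v q ≤ u q) : l1 (q - p) + min (u p) (v q) ≤ 1 := by
  rw [mem_squareS_iff, Set.mem_Icc, Set.mem_Icc] at hp hq
  rw [l1_eq_max_abs, u_sub, v_sub]
  grind

theorem pairwise_l1_sub_le_of_upper {l : List (ℝ × ℝ)} (hl : ∀ p ∈ l, p ∈ squareS ∧ u p ≤ v p)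
    (hf : l.Pairwise Far) (hs : l.Pairwise fun p q => u q ≤ u p) :
    l.Pairwise fun p q => l1 (q - p) ≤ u p - u q :=
  (hf.and hs).imp_of_mem fun hp hq ⟨hpq, h⟩ =>
    l1_sub_le_of_far (hl _ hp).1 (hl _ hq).1 (hl _ hp).2 (hl _ hq).2 hpq h

theorem pairwise_l1_sub_le_of_lower {l : List (ℝ × ℝ)} (hl : ∀ p ∈ l, p ∈ squareS ∧ v p ≤ u p)
    (hf : l.Pairwise Far) (hs : l.Pairwise fun p q => v q ≤ v p) :
    l.Pairwise fun p q => l1 (q - p) ≤ v p - v q :=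
  (hf.and hs).imp_of_mem fun hp hq ⟨hpq, h⟩ =>
    l1_sub_le_of_far_of_lower (hl _ hp).1 (hl _ hq).1 (hl _ hp).2 (hl _ hq).2 hpq h

theorem l1_sub_le_of_pairwise {p : ℝ × ℝ} {l : List (ℝ × ℝ)} (hl : ∀ x ∈ l, x ∈ squareS)
    (hd : (p :: l).Pairwise fun p q => l1 (q - p) ≤ u p - u q) : ∀ x ∈ l, l1 (x - p) ≤ u p :=
  fun x hx => (List.rel_of_pairwise_cons hd hx).trans
    (sub_le_self _ (mem_squareS_iff.1 (hl x hx)).1.1)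

theorem wakesUpByTwo_of_length_le_three {ps : List (ℝ × ℝ)} (hS : ∀ p ∈ ps, p ∈ squareS)
    (h : ps.length ≤ 3) : WakesUpByTwo ps := by
  match ps, h with
  | [], _ => exact ⟨.nil, rfl, by simp [makespan]⟩
  | a :: ds, h =>
    refine ⟨.star a ds, BTree.labels_star a (by simp at h; omega), ?_⟩
    have hm := makespan_star_le (η := l1) (s := 0) zero_le_one
      fun d hd => l1_sub_le_one (hS d (List.mem_cons_of_mem a hd)) (hS a List.mem_cons_self)
    have ha := l1_le_one (hS a (by simp))
    rw [sub_zero] at hm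
    linarith

theorem wakesUpByTwo_node_star {a b c : ℝ × ℝ} {bs cs : List (ℝ × ℝ)} {δb δc : ℝ}
    (hbs : bs.length ≤ 2) (hcs : cs.length ≤ 2) (hδb : 0 ≤ δb) (hδc : 0 ≤ δc)
    (hb : ∀ x ∈ bs, l1 (x - b) ≤ δb) (hc : ∀ x ∈ cs, l1 (x - c) ≤ δc)
    (hab : l1 a + l1 (b - a) + δb ≤ 2) (hac : l1 a + l1 (c - a) + δc ≤ 2) :
    WakesUpByTwo (a ::ₘ b ::ₘ c ::ₘ (bs + cs)) := by
  refine ⟨.node a (.star b bs) (.star c cs), ?_, ?_⟩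
  · rw [BTree.labels, BTree.labels_star b hbs, BTree.labels_star c hcs, Multiset.cons_add,
      Multiset.add_cons]
  · have hb' := makespan_star_le (s := a) hδb hb
    have hc' := makespan_star_le (s := a) hδc hc
    rw [makespan, sub_zero, add_max]
    exact max_le (by linarith) (by linarith)

theorem wakesUpByTwo_of_near {a b c : ℝ × ℝ} {ds : List (ℝ × ℝ)} (ha : a ∈ squareS)
    (hb : b ∈ squareS) (hc : c ∈ squareS) (hds : ∀ d ∈ ds, d ∈ squareS) (hlen : ds.length ≤ 2)
    (hac : l1 a + l1 (c - a) ≤ 1) : WakesUpByTwo (a ::ₘ b ::ₘ c ::ₘ ds) := by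
  simpa using wakesUpByTwo_node_star (bs := []) (by simp) hlen le_rfl zero_le_one (by simp)
    (fun d hd => l1_sub_le_one (hds d hd) hc) (by linarith [l1_le_one ha, l1_sub_le_one hb ha])
    (by linarith)

theorem wakesUpByTwo_of_not_pairwise_far {ps : List (ℝ × ℝ)} (hS : ∀ p ∈ ps, p ∈ squareS)
    (hfar : ¬ ps.Pairwise Far) (h3 : 3 ≤ ps.length) (h5 : ps.length ≤ 5) : WakesUpByTwo ps := by
  obtain ⟨a, c, hsub, hac⟩ : ∃ a c, List.Sublist [a, c] ps ∧ ¬ Far a c := by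
    simpa [List.pairwise_iff_forall_sublist] using hfar
  obtain ⟨rest, hperm⟩ := hsub.exists_perm_append
  have hrest := hperm.length_eq
  simp only [List.cons_append, List.nil_append, List.length_cons] at hrest
  obtain ⟨b, ds, rfl⟩ := List.exists_cons_of_length_pos (by omega : 0 < rest.length)
  have hmem : ∀ p ∈ a :: c :: b :: ds, p ∈ squareS := fun p hp => hS p (hperm.mem_iff.2 hp)
  have hds : ds.length ≤ 2 := by simp at hrest; omega
  have hdsS : ∀ d ∈ ds, d ∈ squareS := fun d hd => hmem d (by simp [hd])
  rw [Multiset.coe_eq_coe.2 hperm]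
  simp only [Far, not_and_or, not_lt] at hac
  rcases hac with hac | hca
  · convert wakesUpByTwo_of_near (hmem a (by simp)) (hmem b (by simp)) (hmem c (by simp)) hdsS
      hds hac using 1
    simp only [List.cons_append, List.nil_append, ← Multiset.cons_coe, Multiset.cons_swap]
  · convert wakesUpByTwo_of_near (hmem c (by simp)) (hmem b (by simp)) (hmem a (by simp)) hdsS
      hds hca using 1
    simp only [List.cons_append, List.nil_append, ← Multiset.cons_coe, Multiset.cons_swap]

theorem wakesUpByTwo_of_upper_chain {a b c : ℝ × ℝ} {ds : List (ℝ × ℝ)}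
    (hS : ∀ x ∈ a :: c :: ds, x ∈ squareS) (hb : b ∈ squareS) (hlen : ds.length ≤ 2)
    (hd : (a :: c :: ds).Pairwise fun p q => l1 (q - p) ≤ u p - u q) :
    WakesUpByTwo (a ::ₘ b ::ₘ c ::ₘ ds) := by
  have ha := mem_squareS_iff.1 (hS a (by simp))
  have hc := mem_squareS_iff.1 (hS c (by simp))
  have hca := List.rel_of_pairwise_cons hd (List.mem_cons_self (a := c))
  simpa using wakesUpByTwo_node_star (bs := []) (cs := ds) (by simp) hlen le_rfl hc.1.1 (by simp)
    (l1_sub_le_of_pairwise (fun x hx => hS x (by simp [hx])) hd.of_cons)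
    (by linarith [l1_le_one (hS a (by simp)), l1_sub_le_one hb (hS a (by simp))])
    (by linarith [l1_le_one (hS a (by simp)), ha.1.2])

theorem wakesUpByTwo_of_two_lower {a c m n : ℝ × ℝ} {us : List (ℝ × ℝ)}
    (hS : ∀ x ∈ a :: c :: us, x ∈ squareS) (hua : u a ≤ v a) (hm : m ∈ squareS)
    (hvm : v m ≤ u m) (hn : n ∈ squareS) (hlen : us.length ≤ 1)
    (hd : (a :: c :: us).Pairwise fun p q => l1 (q - p) ≤ u p - u q)
    (hnm : l1 (n - m) ≤ v m - v n) : WakesUpByTwo (a ::ₘ c ::ₘ m ::ₘ n ::ₘ us) := by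
  have ha := hS a (by simp)
  have hca := List.rel_of_pairwise_cons hd (List.mem_cons_self (a := c))
  have hxa := l1_sub_le_of_pairwise (fun x hx => hS x (List.mem_cons_of_mem a hx)) hd
  have hxc := l1_sub_le_of_pairwise (fun x hx => hS x (by simp [hx])) hd.of_cons
  have hmix := l1_sub_add_min_le_one ha hm hua hvm
  have hvn := (mem_squareS_iff.1 hn).2.1
  rcases le_total (v m) (u a) with h | h
  · rw [min_eq_right h] at hmix
    convert wakesUpByTwo_node_star (a := a) (b := c) (c := m) (cs := [n]) (by omega) (by simp)
      (mem_squareS_iff.1 (hS c (by simp))).1.1 (mem_squareS_iff.1 hm).2.1 hxc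
      (by simpa using hnm.trans (sub_le_self _ hvn))
      (by linarith [l1_le_one ha, (mem_squareS_iff.1 ha).1.2])
      (by linarith [l1_le_one ha]) using 1
    simp only [← Multiset.cons_coe, Multiset.coe_nil, ← Multiset.singleton_add]
    abel
  · rw [min_eq_left h, l1_sub_comm] at hmix
    convert wakesUpByTwo_node_star (a := m) (b := n) (bs := []) (c := a) (cs := c :: us)
      (by simp) (by simp; omega) le_rfl (mem_squareS_iff.1 ha).1.1 (by simp) hxa
      (by linarith [l1_le_one hm, l1_sub_le_one hn hm]) (by linarith [l1_le_one hm]) using 1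
    simp only [← Multiset.cons_coe, Multiset.coe_nil, ← Multiset.singleton_add]
    abel

theorem wakesUpByTwo_of_sorted {U L : List (ℝ × ℝ)}
    (hU : ∀ p ∈ U, p ∈ squareS ∧ u p ≤ v p) (hL : ∀ p ∈ L, p ∈ squareS ∧ v p ≤ u p)
    (hUd : U.Pairwise fun p q => l1 (q - p) ≤ u p - u q)
    (hLd : L.Pairwise fun p q => l1 (q - p) ≤ v p - v q)
    (hlen : L.length ≤ U.length) (h4 : 4 ≤ U.length + L.length)
    (h5 : U.length + L.length ≤ 5) : WakesUpByTwo (U + L) := by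
  obtain ⟨a, c, us, rfl⟩ : ∃ a c us, U = a :: c :: us := by
    rcases U with _ | ⟨a, _ | ⟨c, us⟩⟩
    iterate 2 simp only [List.length_nil, List.length_cons] at hlen h4; omega
    exact ⟨a, c, us, rfl⟩
  have hS : ∀ x ∈ a :: c :: us, x ∈ squareS := fun x hx => (hU x hx).1
  match L, hL, hLd, h4, h5 with
  | [], _, _, h4, h5 =>
    obtain ⟨b, ds, rfl⟩ := List.exists_cons_of_length_pos (by simp at h4; omega : 0 < us.length)
    convert wakesUpByTwo_of_upper_chain (a := a) (c := c) (ds := ds)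
      (fun x hx => hS x (by simp at hx ⊢; tauto)) (hS b (by simp)) (by simp at h5; omega)
      (hUd.sublist (((List.sublist_cons_self b ds).cons_cons c).cons_cons a)) using 1
    simp only [← Multiset.cons_coe, Multiset.coe_nil, ← Multiset.singleton_add]
    abel
  | [b], hL, _, _, h5 =>
    convert wakesUpByTwo_of_upper_chain hS (hL b (by simp)).1 (by simp at h5; omega) hUd using 1
    simp only [← Multiset.cons_coe, Multiset.coe_nil, ← Multiset.singleton_add]
    abel
  | [m, n], hL, hLd, _, h5 =>
    convert wakesUpByTwo_of_two_lower hS (hU a (by simp)).2 (hL m (by simp)).1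
      (hL m (by simp)).2 (hL n (by simp)).1 (by simp at h5; omega) hUd
      (List.rel_of_pairwise_cons hLd (List.mem_singleton_self n)) using 1
    simp only [← Multiset.cons_coe, Multiset.coe_nil, ← Multiset.singleton_add]
    abel
  | _ :: _ :: _ :: _, _, _, _, h5 => simp at hlen h5; omega

theorem wakesUpByTwo_of_pairwise_far_of_partition {U L : List (ℝ × ℝ)}
    (hU : ∀ p ∈ U, p ∈ squareS ∧ u p ≤ v p) (hL : ∀ p ∈ L, p ∈ squareS ∧ v p ≤ u p)
    (hUf : U.Pairwise Far) (hLf : L.Pairwise Far)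
    (hlen : L.length ≤ U.length) (h4 : 4 ≤ U.length + L.length)
    (h5 : U.length + L.length ≤ 5) : WakesUpByTwo (U + L) := by
  obtain ⟨U', hU', hU's⟩ := List.exists_perm_pairwise_ge_comp u U
  obtain ⟨L', hL', hL's⟩ := List.exists_perm_pairwise_ge_comp v L
  have hU'S : ∀ p ∈ U', p ∈ squareS ∧ u p ≤ v p := fun p hp => hU p (hU'.mem_iff.1 hp)
  have hL'S : ∀ p ∈ L', p ∈ squareS ∧ v p ≤ u p := fun p hp => hL p (hL'.mem_iff.1 hp)
  rw [← Multiset.coe_eq_coe.2 hU', ← Multiset.coe_eq_coe.2 hL']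
  rw [← hU'.length_eq, ← hL'.length_eq] at hlen h4 h5
  exact wakesUpByTwo_of_sorted hU'S hL'S
    (pairwise_l1_sub_le_of_upper hU'S ((hU'.pairwise_iff Far.symm).2 hUf) hU's)
    (pairwise_l1_sub_le_of_lower hL'S ((hL'.pairwise_iff Far.symm).2 hLf) hL's) hlen h4 h5

theorem wakesUpByTwo_of_pairwise_far {ps : List (ℝ × ℝ)} (hS : ∀ p ∈ ps, p ∈ squareS)
    (hfar : ps.Pairwise Far) (h4 : 4 ≤ ps.length) (h5 : ps.length ≤ 5) : WakesUpByTwo ps := by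
  set U := ps.filter fun p => decide (u p ≤ v p)
  set L := ps.filter fun p => !decide (u p ≤ v p)
  have hperm : (U ++ L).Perm ps := List.filter_append_perm _ ps
  have hU : ∀ p ∈ U, p ∈ squareS ∧ u p ≤ v p := fun p hp => by
    simp only [U, List.mem_filter, decide_eq_true_eq] at hp
    exact ⟨hS p hp.1, hp.2⟩
  have hL : ∀ p ∈ L, p ∈ squareS ∧ v p ≤ u p := fun p hp => by
    simp only [L, List.mem_filter, Bool.not_eq_true', decide_eq_false_iff_not, not_le] at hp
    exact ⟨hS p hp.1, hp.2.le⟩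
  have hUf : U.Pairwise Far := hfar.sublist List.filter_sublist
  have hLf : L.Pairwise Far := hfar.sublist List.filter_sublist
  have hsum : U.length + L.length = ps.length := by rw [← List.length_append, hperm.length_eq]
  rw [← Multiset.coe_eq_coe.2 hperm, ← Multiset.coe_add]
  rcases le_total L.length U.length with h | h
  · exact wakesUpByTwo_of_pairwise_far_of_partition hU hL hUf hLf h (by omega) (by omega)
  · refine WakesUpByTwo.of_map_reflect ?_
    rw [Multiset.map_add, Multiset.map_coe, Multiset.map_coe, add_comm]
    refine wakesUpByTwo_of_pairwise_far_of_partition ?_ ?_ ?_ ?_ ?_ ?_ ?_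
    · simpa only [List.forall_mem_map, reflect_mem_squareS, u_reflect, v_reflect] using hL
    · simpa only [List.forall_mem_map, reflect_mem_squareS, u_reflect, v_reflect] using hU
    · exact List.pairwise_map.2 (hLf.imp far_reflect_iff.2)
    · exact List.pairwise_map.2 (hUf.imp far_reflect_iff.2)
    all_goals simp only [List.length_map]; omega

end SquareWakeUp

open SquareWakeUp in
/-- a robot at the corner (0,0) of the square `squareS` can wake up any
`n ≤ 5` robots inside the square within two time units (ℓ1-norm). -/
theorem ftp_square_five_robots (ps : List (ℝ × ℝ)) (hlen : ps.length ≤ 5)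
    (hin : ∀ p ∈ ps, p ∈ squareS) :
    ∃ T : BTree (ℝ × ℝ), T.labels = ↑ps ∧ makespan l1 0 T ≤ 2 := by
  rcases le_or_gt ps.length 3 with h3 | h4
  · exact wakesUpByTwo_of_length_le_three hin h3
  by_cases hfar : ps.Pairwise Far
  · exact wakesUpByTwo_of_pairwise_far hin hfar h4 hlen
  · exact wakesUpByTwo_of_not_pairwise_far hin hfar h4.le hlen
end

section
/- There exist 6 points in the square S = {(x,y) ∈ ℝ² : |x − 1/2| + |y| ≤ 1/2} (a square of diameter 1 in the ℓ1-plane with corner at the origin) such that every wake-up tree rooted at the corner (0,0) spanning these 6 points, with edge lengths measured in the ℓ1-norm, has makespan at least 13/6. -/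
noncomputable def Ppt : Fin 7 → ℝ × ℝ := fun i =>
  match i with
  | ⟨0, _⟩ => 0
  | ⟨1, _⟩ => (1, 0)
  | ⟨2, _⟩ => (5/6, -(1/6))
  | ⟨3, _⟩ => (1/2, 1/2)
  | ⟨4, _⟩ => (5/12, 5/12)
  | ⟨5, _⟩ => (2/3, -(1/3))
  | ⟨6, _⟩ => (1/2, -(1/2))

def Dmat : List (List ℕ) :=
  [[0,12,12,12,10,12,12],[12,0,4,12,12,8,12],[12,4,0,12,12,4,8],[12,12,12,0,2,12,12],
   [10,12,12,2,0,12,12],[12,8,4,12,12,0,4],[12,12,8,12,12,4,0]]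

def Dd (j i : Fin 7) : ℕ := (Dmat.getD j []).getD i 0

def Tmat : List (List ℕ) :=
  [[0,12,12,16,12,24,24,24,10,22,22,22,12,22,22,24,12,20,16,16,24,24,24,24,22,22,22,24,22,24,24,24,12,24,20,20,24,24,24,24,22,22,22,24,22,24,24,24,16,20,16,20,24,24,24,24,22,24,24,24,24,24,24,26],
   [0,0,4,4,12,12,16,12,12,12,16,12,14,12,16,14,8,8,8,8,20,12,16,12,20,12,16,12,20,14,18,14,12,12,12,12,24,12,16,12,24,12,16,12,24,14,18,14,12,12,12,12,20,12,16,12,20,12,16,12,22,14,18,14],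
   [0,4,0,4,12,16,12,12,12,16,12,12,14,16,12,14,4,12,4,4,16,16,12,12,16,16,12,12,16,18,14,14,8,16,8,8,20,16,12,16,20,16,12,16,20,18,14,16,8,12,8,8,16,16,12,12,16,16,12,12,18,18,14,14],
   [0,12,12,16,0,12,12,12,2,14,14,14,2,12,12,14,12,20,16,16,12,12,12,16,14,14,14,18,12,14,14,14,12,24,20,20,12,12,12,16,14,14,14,18,12,14,14,14,16,20,16,20,12,16,16,16,14,18,18,18,14,14,14,16],
   [0,12,12,16,2,14,14,14,0,12,12,12,2,12,12,14,12,20,16,16,14,14,14,18,12,12,12,16,12,14,14,14,12,24,20,20,14,14,14,18,12,12,12,16,12,14,14,14,16,20,16,20,14,18,18,18,12,16,16,16,14,14,14,16],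
   [0,8,4,8,12,20,16,16,12,20,16,16,14,20,16,18,0,8,4,8,12,12,12,12,12,12,12,12,12,14,14,14,4,16,12,12,16,16,16,16,16,16,16,16,16,18,18,18,4,8,4,8,12,16,12,12,12,16,12,12,14,16,14,14],
   [0,12,8,12,12,24,20,20,12,24,20,20,14,24,20,22,4,12,8,12,16,16,16,16,16,16,16,16,16,18,18,18,0,12,8,12,12,12,12,12,12,12,12,12,12,14,14,14,4,12,8,12,12,12,12,12,12,12,12,12,14,14,14,14]]

def tab (j : Fin 7) (F : Finset (Fin 6)) : ℕ :=
  (Tmat.getD j []).getD (∑ i ∈ F, 2 ^ (i : ℕ)) 0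

set_option maxRecDepth 10000 in
lemma tab_trans : ∀ (j : Fin 7) (F : Finset (Fin 6)), ∀ i ∈ F, ∀ L ⊆ F.erase i,
    tab j F ≤ Dd j i.succ + max (tab i.succ L) (tab i.succ (F.erase i \ L)) := by decide

lemma tab_empty (j : Fin 7) : tab j ∅ = 0 := by fin_cases j <;> rfl

lemma tab_full : tab 0 Finset.univ = 26 := by decide

set_option maxHeartbeats 2000000 in
lemma Dd_correct (j i : Fin 7) : (Dd j i : ℝ) = 12 * l1 (Ppt i - Ppt j) := by
  fin_cases j <;> fin_cases i <;>
    norm_num [Dd, Dmat, Ppt, l1, Prod.fst_sub, Prod.snd_sub, abs, max_def]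

lemma Ppt_inj : Function.Injective (fun i : Fin 6 => Ppt i.succ) := by
  intro a b h
  fin_cases a <;> fin_cases b <;>
    first | rfl | (exfalso; rw [Prod.ext_iff] at h; norm_num [Ppt] at h)

lemma key (T : BTree (ℝ × ℝ)) : ∀ (j : Fin 7) (F : Finset (Fin 6)),
    T.labels = Multiset.map (fun i => Ppt i.succ) F.val →
    (tab j F : ℝ) ≤ 12 * makespan l1 (Ppt j) T := by
  induction T with
  | nil =>
    intro j F h
    have h0 : Multiset.map (fun i => Ppt i.succ) F.val = 0 := by
      rw [← h]; rfl
    have hF : F = ∅ := Finset.val_eq_zero.mp (Multiset.map_eq_zero.mp h0)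
    subst hF
    simp [makespan, tab_empty]
  | node p l r ihl ihr =>
    classical
    intro j F h
    simp only [BTree.labels] at h
    have hp : p ∈ Multiset.map (fun i => Ppt i.succ) F.val := by
      rw [← h]; exact Multiset.mem_cons_self _ _
    obtain ⟨i, hi, hpi⟩ := Multiset.mem_map.mp hp
    have hpi' : Ppt i.succ = p := hpi
    have hiF : i ∈ F := Finset.mem_def.mpr hi
    have hrest : l.labels + r.labels
        = Multiset.map (fun i => Ppt i.succ) (F.erase i).val := by
      have h2 : (p ::ₘ (l.labels + r.labels)).erase p
          = (Multiset.map (fun i => Ppt i.succ) F.val).erase p := by rw [h]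
      rw [Multiset.erase_cons_head] at h2
      rw [h2, ← hpi', Finset.erase_val,
        Multiset.map_erase _ Ppt_inj]
    set L : Finset (Fin 6) := (F.erase i).filter (fun k => Ppt k.succ ∈ l.labels)
      with hLdef
    have hsub : L ⊆ F.erase i := Finset.filter_subset _ _
    have hndu : ((F.erase i).val.map (fun i => Ppt i.succ)).Nodup :=
      (F.erase i).nodup.map Ppt_inj
    have hll : l.labels ≤ Multiset.map (fun i => Ppt i.succ) (F.erase i).val := by
      rw [← hrest]; exact Multiset.le_add_right _ _
    have hlnd : l.labels.Nodup := Multiset.nodup_of_le hll hndu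
    have hLeq : l.labels = Multiset.map (fun i => Ppt i.succ) L.val := by
      rw [Multiset.Nodup.ext hlnd (Multiset.Nodup.map Ppt_inj L.nodup)]
      intro a
      constructor
      · intro ha
        obtain ⟨k, hk, hka⟩ := Multiset.mem_map.mp (Multiset.mem_of_le hll ha)
        refine Multiset.mem_map.mpr ⟨k, ?_, hka⟩
        refine Finset.mem_val.mpr (Finset.mem_filter.mpr ⟨Finset.mem_val.mp hk, ?_⟩)
        show Ppt k.succ ∈ l.labels
        rw [show Ppt k.succ = a from hka]; exact ha
      · intro ha
        obtain ⟨k, hk, hka⟩ := Multiset.mem_map.mp ha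
        have hmem := (Finset.mem_filter.mp (Finset.mem_val.mp hk)).2
        rw [show Ppt k.succ = a from hka] at hmem
        exact hmem
    have hval : L.val ≤ (F.erase i).val := Finset.val_le_iff.mpr hsub
    have hsplit : (F.erase i).val = L.val + ((F.erase i) \ L).val := by
      rw [Finset.sdiff_val]
      exact (add_tsub_cancel_of_le hval).symm
    have hReq : r.labels = Multiset.map (fun i => Ppt i.succ) ((F.erase i) \ L).val := by
      have he : Multiset.map (fun i => Ppt i.succ) L.val + r.labels
          = Multiset.map (fun i => Ppt i.succ) L.val
            + Multiset.map (fun i => Ppt i.succ) ((F.erase i) \ L).val := by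
        rw [← Multiset.map_add, ← hsplit, ← hrest, hLeq]
      exact add_left_cancel he
    have htrans := tab_trans j F i hiF L hsub
    have ihl' := ihl i.succ L hLeq
    have ihr' := ihr i.succ ((F.erase i) \ L) hReq
    have hD := Dd_correct j i.succ
    have hms : makespan l1 (Ppt j) (BTree.node p l r)
        = l1 (p - Ppt j) + max (makespan l1 p l) (makespan l1 p r) := rfl
    rw [hms, ← hpi']
    have hcast : (tab j F : ℝ) ≤ (Dd j i.succ : ℝ)
        + max (tab i.succ L : ℝ) (tab i.succ ((F.erase i) \ L) : ℝ) := by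
      have := (Nat.cast_le (α := ℝ)).mpr htrans
      push_cast at this
      exact this
    have h1 : max (tab i.succ L : ℝ) (tab i.succ ((F.erase i) \ L) : ℝ)
        ≤ 12 * max (makespan l1 (Ppt i.succ) l) (makespan l1 (Ppt i.succ) r) := by
      apply max_le
      · exact le_trans ihl' (mul_le_mul_of_nonneg_left (le_max_left _ _) (by norm_num))
      · exact le_trans ihr' (mul_le_mul_of_nonneg_left (le_max_right _ _) (by norm_num))
    linarith

/-- there are 6 points in the square `squareS` such that every wake-up tree
rooted at the corner (0,0) spanning them has makespan at least 13/6 (ℓ1-norm). -/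
theorem ftp_square_six_robots_lower_bound :
    ∃ ps : List (ℝ × ℝ), ps.length = 6 ∧ (∀ p ∈ ps, p ∈ squareS) ∧
      ∀ T : BTree (ℝ × ℝ), T.labels = ↑ps → 13 / 6 ≤ makespan l1 0 T := by
  refine ⟨[Ppt 1, Ppt 2, Ppt 3, Ppt 4, Ppt 5, Ppt 6], rfl, ?_, ?_⟩
  · intro p hp
    simp only [List.mem_cons, List.not_mem_nil, or_false] at hp
    rcases hp with rfl | rfl | rfl | rfl | rfl | rfl <;>
      · show _ ∈ {p : ℝ × ℝ | |p.1 - 1/2| + |p.2| ≤ 1/2}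
        norm_num [Ppt, Set.mem_setOf_eq, abs, max_def]
  · intro T hT
    have hT' : T.labels
        = Multiset.map (fun i : Fin 6 => Ppt i.succ) (Finset.univ : Finset (Fin 6)).val := by
      rw [hT]
      have h1 : (Finset.univ : Finset (Fin 6)).val
          = (↑([0, 1, 2, 3, 4, 5] : List (Fin 6)) : Multiset (Fin 6)) := by decide
      rw [h1, Multiset.map_coe]
      rfl
    have hkey := key T 0 Finset.univ hT'
    rw [tab_full] at hkey
    have h0 : Ppt 0 = 0 := rfl
    rw [h0] at hkey
    norm_num at hkey
    linarith
end

section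
/- For every norm η on ℝ²: γ₀(η) = 0, γ₁(η) = 1, γ₂(η) = γ₃(η) = 3, and γₙ(η) ≥ 3 for every n ≥ 2. -/
namespace WakeHelp

variable {η : ℝ × ℝ → ℝ}

lemma norm_zero (hη : IsNorm η) : η 0 = 0 := (hη.1 0).2 rfl

lemma norm_neg (hη : IsNorm η) (x : ℝ × ℝ) : η (-x) = η x := by
  have h := hη.2.1 (-1) x
  simpa using h

lemma norm_nonneg (hη : IsNorm η) (x : ℝ × ℝ) : 0 ≤ η x := by
  have h1 := hη.2.2 x (-x)
  rw [add_neg_cancel, norm_zero hη, norm_neg hη] at h1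
  linarith

lemma norm_sub_le (hη : IsNorm η) (x y : ℝ × ℝ) : η (x - y) ≤ η x + η y := by
  have h := hη.2.2 x (-y)
  rw [norm_neg hη] at h
  simpa [sub_eq_add_neg] using h

lemma ms_nonneg (hη : IsNorm η) (s : ℝ × ℝ) (T : BTree (ℝ × ℝ)) :
    0 ≤ makespan η s T := by
  induction T generalizing s with
  | nil => simp [makespan]
  | node p l r ihl ihr =>
    simp only [makespan]
    have := norm_nonneg hη (p - s)
    have h2 : (0:ℝ) ≤ max (makespan η p l) (makespan η p r) := le_max_of_le_left (ihl p)
    linarith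

lemma le_ms_of_mem (hη : IsNorm η) (s x : ℝ × ℝ) (T : BTree (ℝ × ℝ))
    (hx : x ∈ T.labels) : η (x - s) ≤ makespan η s T := by
  induction T generalizing s with
  | nil => simp [BTree.labels] at hx
  | node p l r ihl ihr =>
    simp only [BTree.labels, Multiset.mem_cons, Multiset.mem_add] at hx
    simp only [makespan]
    have htri : η (x - s) ≤ η (p - s) + η (x - p) := by
      have h := hη.2.2 (p - s) (x - p)
      have he : (p - s) + (x - p) = x - s := by abel
      rw [he] at h; exact h
    rcases hx with rfl | hx | hx
    · have h2 : (0:ℝ) ≤ max (makespan η x l) (makespan η x r) :=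
        le_max_of_le_left (ms_nonneg hη x l)
      linarith
    · have h2 : η (x - p) ≤ max (makespan η p l) (makespan η p r) :=
        le_trans (ihl p hx) (le_max_left _ _)
      linarith
    · have h2 : η (x - p) ≤ max (makespan η p l) (makespan η p r) :=
        le_trans (ihr p hx) (le_max_right _ _)
      linarith


def chain : List (ℝ × ℝ) → BTree (ℝ × ℝ)
  | [] => .nil
  | a :: l => .node a (chain l) .nil

lemma labels_chain (l : List (ℝ × ℝ)) : (chain l).labels = ↑l := by
  induction l with
  | nil => simp [chain, BTree.labels]
  | cons a l ih => simp [chain, BTree.labels, ih]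

lemma ms_chain_le (hη : IsNorm η) (l : List (ℝ × ℝ)) (s : ℝ × ℝ)
    (hs : η s ≤ 1) (hl : ∀ p ∈ l, η p ≤ 1) :
    makespan η s (chain l) ≤ 2 * l.length := by
  induction l generalizing s with
  | nil => simp [chain, makespan]
  | cons a l ih =>
    simp only [chain, makespan, List.length_cons]
    have h1 : η (a - s) ≤ 2 := by
      have := norm_sub_le hη a s
      have := hl a (by simp)
      linarith
    have h2 : makespan η a (chain l) ≤ 2 * l.length :=
      ih a (hl a (by simp)) (fun p hp => hl p (by simp [hp]))
    rw [max_eq_left (ms_nonneg hη a (chain l))]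
    push_cast
    linarith

lemma exists_unit (hη : IsNorm η) : ∃ p : ℝ × ℝ, η p = 1 := by
  have hx : ((1 : ℝ), (0 : ℝ)) ≠ (0 : ℝ × ℝ) := by
    simp [Prod.ext_iff]
  have hne : η (1, 0) ≠ 0 := fun h => hx ((hη.1 _).1 h)
  have hpos : 0 < η (1, 0) := lt_of_le_of_ne (norm_nonneg hη _) (Ne.symm hne)
  refine ⟨(η (1, 0))⁻¹ • (1, 0), ?_⟩
  rw [hη.2.1, abs_of_pos (by positivity), inv_mul_cancel₀ hne]

lemma key3 (hη : IsNorm η) (p : ℝ × ℝ) (hp : η p = 1) (T : BTree (ℝ × ℝ))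
    (hall : ∀ x ∈ T.labels, x = p ∨ x = -p)
    (h1 : p ∈ T.labels) (h2 : -p ∈ T.labels) :
    3 ≤ makespan η 0 T := by
  have hp0 : p ≠ 0 := by
    intro h; rw [h, norm_zero hη] at hp; norm_num at hp
  have hpne : p ≠ -p := by
    intro h
    apply hp0
    have h2p : (2 : ℝ) • p = 0 := by
      rw [two_smul]
      nth_rewrite 2 [h]
      abel
    rcases smul_eq_zero.mp h2p with h' | h'
    · norm_num at h'
    · exact h'
  cases T with
  | nil => simp [BTree.labels] at h1
  | node q l r =>
    have hq : q = p ∨ q = -p := hall q (by simp [BTree.labels])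
    have hηq : η q = 1 := by
      rcases hq with rfl | rfl
      · exact hp
      · rw [norm_neg hη]; exact hp
    have hopp : -q ∈ l.labels + r.labels := by
      rcases hq with rfl | rfl
      · simp only [BTree.labels, Multiset.mem_cons] at h2
        rcases h2 with h | h
        · exact absurd h.symm hpne
        · exact h
      · rw [neg_neg]
        simp only [BTree.labels, Multiset.mem_cons] at h1
        rcases h1 with h | h
        · exact absurd h hpne
        · exact h
    have h2q : η (-q - q) = 2 := by
      have he : -q - q = -((2 : ℝ) • q) := by rw [two_smul]; abel
      rw [he, norm_neg hη, hη.2.1, hηq]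
      norm_num
    have hmax : 2 ≤ max (makespan η q l) (makespan η q r) := by
      rcases Multiset.mem_add.mp hopp with h | h
      · exact le_max_of_le_left (h2q ▸ le_ms_of_mem hη q (-q) l h)
      · exact le_max_of_le_right (h2q ▸ le_ms_of_mem hη q (-q) r h)
    simp only [makespan, sub_zero]
    linarith


noncomputable def minMS (η : ℝ × ℝ → ℝ) (ps : List (ℝ × ℝ)) : ℝ :=
  sInf { t : ℝ | ∃ T : BTree (ℝ × ℝ), T.labels = ↑ps ∧ makespan η 0 T = t }

lemma Tset_nonempty (η : ℝ × ℝ → ℝ) (ps : List (ℝ × ℝ)) :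
    { t : ℝ | ∃ T : BTree (ℝ × ℝ), T.labels = ↑ps ∧ makespan η 0 T = t }.Nonempty :=
  ⟨makespan η 0 (chain ps), chain ps, labels_chain ps, rfl⟩

lemma Tset_bddBelow (hη : IsNorm η) (ps : List (ℝ × ℝ)) :
    BddBelow { t : ℝ | ∃ T : BTree (ℝ × ℝ), T.labels = ↑ps ∧ makespan η 0 T = t } := by
  refine ⟨0, ?_⟩
  rintro t ⟨T, _, rfl⟩
  exact ms_nonneg hη 0 T

lemma minMS_le (hη : IsNorm η) (ps : List (ℝ × ℝ)) (T : BTree (ℝ × ℝ))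
    (hT : T.labels = ↑ps) : minMS η ps ≤ makespan η 0 T :=
  csInf_le (Tset_bddBelow hη ps) ⟨T, hT, rfl⟩

lemma le_minMS (hη : IsNorm η) (ps : List (ℝ × ℝ)) (c : ℝ)
    (h : ∀ T : BTree (ℝ × ℝ), T.labels = ↑ps → c ≤ makespan η 0 T) :
    c ≤ minMS η ps := by
  refine le_csInf (Tset_nonempty η ps) ?_
  rintro t ⟨T, hT, rfl⟩
  exact h T hT

lemma minMS_le_two_len (hη : IsNorm η) (ps : List (ℝ × ℝ))
    (hball : ∀ p ∈ ps, η p ≤ 1) : minMS η ps ≤ 2 * ps.length := by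
  refine le_trans (minMS_le hη ps (chain ps) (labels_chain ps)) ?_
  exact ms_chain_le hη ps 0 (by rw [norm_zero hη]; norm_num) hball

lemma S_bddAbove (hη : IsNorm η) (n : ℕ) :
    BddAbove { m : ℝ | ∃ ps : List (ℝ × ℝ), ps.length = n ∧ (∀ p ∈ ps, η p ≤ 1) ∧
      m = minMS η ps } := by
  refine ⟨2 * n, ?_⟩
  rintro m ⟨ps, hlen, hball, rfl⟩
  have := minMS_le_two_len hη ps hball
  rw [hlen] at this
  exact this

lemma gammaN_eq (η : ℝ × ℝ → ℝ) (n : ℕ) :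
    gammaN η n = sSup { m : ℝ | ∃ ps : List (ℝ × ℝ), ps.length = n ∧
      (∀ p ∈ ps, η p ≤ 1) ∧ m = minMS η ps } := rfl

lemma minMS_nil (hη : IsNorm η) : minMS η [] = 0 := by
  have hset : { t : ℝ | ∃ T : BTree (ℝ × ℝ), T.labels = ↑([] : List (ℝ × ℝ)) ∧
      makespan η 0 T = t } = {0} := by
    ext t
    simp only [Set.mem_setOf_eq, Set.mem_singleton_iff]
    constructor
    · rintro ⟨T, hT, rfl⟩
      cases T with
      | nil => simp [makespan]
      | node p l r => simp [BTree.labels] at hT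
    · rintro rfl
      exact ⟨.nil, by simp [BTree.labels], by simp [makespan]⟩
  rw [minMS, hset, csInf_singleton]

end WakeHelp

/-- for every norm η on ℝ²: γ₀(η) = 0, γ₁(η) = 1, γ₂(η) = γ₃(η) = 3, and
γₙ(η) ≥ 3 for every n ≥ 2. -/
theorem ftp_small_gammaN (η : ℝ × ℝ → ℝ) (hη : IsNorm η) :
    gammaN η 0 = 0 ∧ gammaN η 1 = 1 ∧ gammaN η 2 = 3 ∧ gammaN η 3 = 3 ∧
    ∀ n : ℕ, 2 ≤ n → 3 ≤ gammaN η n := by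
  open WakeHelp in
  obtain ⟨u, hu⟩ := WakeHelp.exists_unit hη
  have hnn := WakeHelp.norm_nonneg hη
  have hun : η (-u) = 1 := by rw [WakeHelp.norm_neg hη]; exact hu
  -- the ≥ 3 part, proved first
  have h5 : ∀ n : ℕ, 2 ≤ n → 3 ≤ gammaN η n := by
    intro n hn
    set ps : List (ℝ × ℝ) := u :: (-u) :: List.replicate (n - 2) u with hps
    have hlen : ps.length = n := by
      simp only [hps, List.length_cons, List.length_replicate]
      omega
    have hall : ∀ x ∈ ps, x = u ∨ x = -u := by
      intro x hx
      simp only [hps, List.mem_cons, List.mem_replicate] at hx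
      rcases hx with rfl | rfl | ⟨-, rfl⟩
      · exact Or.inl rfl
      · exact Or.inr rfl
      · exact Or.inl rfl
    have hball : ∀ x ∈ ps, η x ≤ 1 := by
      intro x hx
      rcases hall x hx with rfl | rfl
      · rw [hu]
      · rw [hun]
    have hkey : 3 ≤ WakeHelp.minMS η ps := by
      refine WakeHelp.le_minMS hη ps 3 ?_
      intro T hT
      refine WakeHelp.key3 hη u hu T ?_ ?_ ?_
      · intro x hx
        rw [hT, Multiset.mem_coe] at hx
        exact hall x hx
      · rw [hT, Multiset.mem_coe]; simp [hps]
      · rw [hT, Multiset.mem_coe]; simp [hps]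
    rw [WakeHelp.gammaN_eq]
    exact le_trans hkey (le_csSup (WakeHelp.S_bddAbove hη n) ⟨ps, hlen, hball, rfl⟩)
  refine ⟨?_, ?_, ?_, ?_, h5⟩
  · -- γ₀ = 0
    rw [WakeHelp.gammaN_eq]
    have hset : { m : ℝ | ∃ ps : List (ℝ × ℝ), ps.length = 0 ∧
        (∀ p ∈ ps, η p ≤ 1) ∧ m = WakeHelp.minMS η ps } = {0} := by
      ext m
      simp only [Set.mem_setOf_eq, Set.mem_singleton_iff]
      constructor
      · rintro ⟨ps, hlen, -, rfl⟩
        rw [List.length_eq_zero_iff.mp hlen, WakeHelp.minMS_nil hη]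
      · rintro rfl
        exact ⟨[], rfl, by simp, (WakeHelp.minMS_nil hη).symm⟩
    rw [hset, csSup_singleton]
  · -- γ₁ = 1
    rw [WakeHelp.gammaN_eq]
    have hmem : WakeHelp.minMS η [u] ∈ { m : ℝ | ∃ ps : List (ℝ × ℝ), ps.length = 1 ∧
        (∀ p ∈ ps, η p ≤ 1) ∧ m = WakeHelp.minMS η ps } :=
      ⟨[u], rfl, by simp [hu], rfl⟩
    refine le_antisymm ?_ ?_
    · refine csSup_le ⟨_, hmem⟩ ?_
      rintro m ⟨ps, hlen, hball, rfl⟩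
      obtain ⟨a, rfl⟩ := List.length_eq_one_iff.mp hlen
      have hms : makespan η 0 (WakeHelp.chain [a]) = η a := by
        simp [WakeHelp.chain, makespan, sub_zero]
      refine le_trans (WakeHelp.minMS_le hη [a] _ (WakeHelp.labels_chain [a])) ?_
      rw [hms]
      exact hball a (by simp)
    · have h1 : 1 ≤ WakeHelp.minMS η [u] := by
        refine WakeHelp.le_minMS hη [u] 1 ?_
        intro T hT
        have hmem' : u ∈ T.labels := by rw [hT]; simp
        have := WakeHelp.le_ms_of_mem hη 0 u T hmem'
        rwa [sub_zero, hu] at this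
      exact le_trans h1 (le_csSup (WakeHelp.S_bddAbove hη 1) hmem)
  · -- γ₂ = 3
    refine le_antisymm ?_ (h5 2 le_rfl)
    rw [WakeHelp.gammaN_eq]
    refine csSup_le ⟨WakeHelp.minMS η [u, u], [u, u], rfl, by simp [hu], rfl⟩ ?_
    rintro m ⟨ps, hlen, hball, rfl⟩
    obtain ⟨a, b, rfl⟩ := List.length_eq_two.mp hlen
    have hms : makespan η 0 (WakeHelp.chain [a, b]) = η a + η (b - a) := by
      simp [WakeHelp.chain, makespan, sub_zero, max_eq_left (hnn (b - a))]
    refine le_trans (WakeHelp.minMS_le hη [a, b] _ (WakeHelp.labels_chain [a, b])) ?_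
    rw [hms]
    have h1 := hball a (by simp)
    have h2 := hball b (by simp)
    have h3 := WakeHelp.norm_sub_le hη b a
    linarith
  · -- γ₃ = 3
    refine le_antisymm ?_ (h5 3 (by norm_num))
    rw [WakeHelp.gammaN_eq]
    refine csSup_le ⟨WakeHelp.minMS η [u, u, u], [u, u, u], rfl, by simp [hu], rfl⟩ ?_
    rintro m ⟨ps, hlen, hball, rfl⟩
    obtain ⟨a, b, c, rfl⟩ := List.length_eq_three.mp hlen
    set T : BTree (ℝ × ℝ) := .node a (.node b .nil .nil) (.node c .nil .nil) with hTdef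
    have hlab : T.labels = ↑[a, b, c] := by
      show a ::ₘ ((b ::ₘ (0 + 0)) + (c ::ₘ (0 + 0))) = _
      simp only [add_zero]
      rfl
    have hms : makespan η 0 T = η a + max (η (b - a)) (η (c - a)) := by
      simp [hTdef, makespan, sub_zero]
    refine le_trans (WakeHelp.minMS_le hη [a, b, c] T hlab) ?_
    rw [hms]
    have h1 := hball a (by simp)
    have h2 := hball b (by simp)
    have h3 := hball c (by simp)
    have h4 : max (η (b - a)) (η (c - a)) ≤ 2 := by
      refine max_le ?_ ?_
      · have := WakeHelp.norm_sub_le hη b a; linarith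
      · have := WakeHelp.norm_sub_le hη c a; linarith
    linarith
end
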